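/- There is an absolute constant c > 0 such that for every odd prime p, every n, and every v ∈ F_p^n, with ξ uniform on {−1,1}^n: |E[exp(2πi·((ξ·v)^)/p)]| = ∏_{j : v_j ≠ 0} |cos(2π·v̂_j/p)| ≤ exp(−c·|supp(v)|/p²), where v̂_j ∈ {0,…,p−1} is the standard integer representative of v_j, w^ is the representative of w ∈ F_p, ξ·v is the F_p dot product, and supp(v) is the set of coordinates where v is nonzero. -/

import Mathlib

/-!
Averaging the character `e(x) = exp(2πi x̂/p)` of `ξ·v` over independent signs factors into
`∏ⱼ (e(vⱼ) + e(-vⱼ))/2 = ∏ⱼ cos(2π v̂ⱼ/p)`. For `vⱼ ≠ 0`, oddness of `p` gives `p ∤ 2v̂ⱼ`, so modulo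
`π` the angle `2π v̂ⱼ/p` lies in `[π/p, π - π/p]`; hence
`|cos(2π v̂ⱼ/p)| ≤ cos(π/p) ≤ 1 - 2/p² ≤ exp(-2/p²)`, and `c = 2` works.
-/

open Finset Matrix

noncomputable section

/-- The sign `±1` associated to a Boolean. -/
def signb (R : Type*) [Ring R] (b : Bool) : R := if b then 1 else -1

open Classical in
/-- Uniform/counting probability of an event on a finite sample space. -/
def prob {Ω : Type*} [Fintype Ω] (E : Ω → Prop) : ℝ :=
  ((Finset.univ.filter E).card : ℝ) / (Fintype.card Ω : ℝ)

/-- The symmetric random sign matrix determined by the Boolean data `ω`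
(only the entries `ω i j` with `i ≤ j` are used); it is uniformly distributed
over symmetric `±1` matrices when `ω` is uniform. -/
def symMat (R : Type*) [Ring R] {n : ℕ} (ω : Fin n → Fin n → Bool) :
    Matrix (Fin n) (Fin n) R :=
  Matrix.of fun i j => signb R (ω (min i j) (max i j))

/-- Atom probability of a vector over `ZMod p` w.r.t. i.i.d. Rademacher signs. -/
def rho (p : ℕ) {ι : Type*} [Fintype ι] [DecidableEq ι] (w : ι → ZMod p) : ℝ :=
  ⨆ r : ZMod p, prob (fun ξ : ι → Bool => ∑ i, signb (ZMod p) (ξ i) * w i = r)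

/-- Discrepancy of a vector over `ZMod p` w.r.t. i.i.d. Rademacher signs. -/
def disc (p : ℕ) {ι : Type*} [Fintype ι] [DecidableEq ι] (w : ι → ZMod p) : ℝ :=
  ⨆ x : ZMod p,
    |prob (fun ξ : ι → Bool => ∑ i, signb (ZMod p) (ξ i) * w i = x) - 1 / (p : ℝ)|

/-- `E[exp(2πi·(ξ·w)^/p)]` for a uniformly random sign vector `ξ`, where `(·)^`
is the standard integer representative in `{0, …, p-1}`. -/
def expE {ι : Type*} [Fintype ι] [DecidableEq ι] (p : ℕ) (w : ι → ZMod p) : ℂ :=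
  (∑ ξ : ι → Bool,
      Complex.exp (2 * Real.pi * Complex.I *
        ((∑ i, signb (ZMod p) (ξ i) * w i).val : ℂ) / (p : ℂ))) /
    (Fintype.card (ι → Bool) : ℂ)

open Real

theorem AddChar.map_sum_eq_prod {A M ι : Type*} [AddCommMonoid A] [CommMonoid M]
    (ψ : AddChar A M) (s : Finset ι) (f : ι → A) : ψ (∑ i ∈ s, f i) = ∏ i ∈ s, ψ (f i) :=
  map_prod ψ.toMonoidHom (fun i => Multiplicative.ofAdd (f i)) s

theorem sum_addChar_signb_mul {R M ι : Type*} [Ring R] [CommSemiring M] [Fintype ι]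
    [DecidableEq ι] (ψ : AddChar R M) (w : ι → R) :
    ∑ ξ : ι → Bool, ψ (∑ i, signb R (ξ i) * w i) = ∏ i, (ψ (w i) + ψ (-w i)) := by
  simp_rw [AddChar.map_sum_eq_prod]
  rw [← Fintype.prod_sum fun i b => ψ (signb R b * w i)]
  simp [signb]

theorem ZMod.stdAddChar_add_stdAddChar_neg {N : ℕ} [NeZero N] (x : ZMod N) :
    stdAddChar x + stdAddChar (-x) = 2 * (cos (2 * π * x.val / N) : ℂ) := by
  rw [ZMod.stdAddChar_apply, ZMod.stdAddChar_apply, AddChar.map_neg_eq_inv,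
    ZMod.toCircle_eq_circleExp, ← Circle.exp_neg, Circle.coe_exp, Circle.coe_exp,
    Complex.ofReal_cos, Complex.two_cos]
  push_cast
  ring_nf

theorem expE_eq_prod_cos {ι : Type*} [Fintype ι] [DecidableEq ι] (p : ℕ) [NeZero p]
    (v : ι → ZMod p) : expE p v = ∏ i, (cos (2 * π * (v i).val / p) : ℂ) := by
  have hchar : expE p v = (∑ ξ : ι → Bool, ZMod.stdAddChar (∑ i, signb (ZMod p) (ξ i) * v i)) /
      (Fintype.card (ι → Bool) : ℂ) := by
    simp only [expE, ZMod.stdAddChar_apply, ZMod.toCircle_apply]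
  rw [hchar, sum_addChar_signb_mul]
  simp_rw [ZMod.stdAddChar_add_stdAddChar_neg, Finset.prod_mul_distrib, Finset.prod_const,
    Finset.card_univ, Fintype.card_fun, Fintype.card_bool]
  push_cast
  field_simp

theorem Real.abs_cos_le_cos_of_mem_Icc {a x : ℝ} (ha : 0 ≤ a) (hx : x ∈ Set.Icc a (π - a)) :
    |cos x| ≤ cos a := by
  have hπa : a ≤ π := by linarith [hx.1, hx.2]
  refine abs_le.mpr ⟨?_, cos_le_cos_of_nonneg_of_le_pi ha (by linarith [hx.2]) hx.1⟩
  rw [neg_le, ← cos_pi_sub]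
  exact cos_le_cos_of_nonneg_of_le_pi ha (by linarith [hx.1]) (by linarith [hx.2])

theorem abs_cos_two_pi_mul_div_le {p k : ℕ} (hp : Odd p) (hk : ¬ p ∣ k) :
    |cos (2 * π * k / p)| ≤ cos (π / p) := by
  have hp0 : (0 : ℝ) < p := by exact_mod_cast hp.pos
  set r := 2 * k % p
  have hr : r ≠ 0 := fun h =>
    hk ((Nat.Coprime.dvd_mul_left hp.coprime_two_right).mp (Nat.dvd_of_mod_eq_zero h))
  have hrp : r < p := Nat.mod_lt _ hp.pos
  -- reducing `2k` modulo `p` shifts the angle by a multiple of `π`, which only flips the sign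
  set q := 2 * k / p
  have hangle : 2 * π * k / p = π * r / p + (q : ℤ) * π := by
    have hdiv : (r : ℝ) + p * q = 2 * k := by exact_mod_cast Nat.mod_add_div (2 * k) p
    push_cast
    field_simp
    linear_combination -hdiv
  rw [hangle, cos_add_int_mul_pi, abs_mul, abs_zpow, abs_neg, abs_one, _root_.one_zpow, one_mul]
  refine abs_cos_le_cos_of_mem_Icc (by positivity) ⟨?_, ?_⟩
  · gcongr
    exact le_mul_of_one_le_right pi_pos.le (by exact_mod_cast Nat.one_le_iff_ne_zero.mpr hr)
  · rw [le_sub_iff_add_le, ← add_div, ← mul_add_one, div_le_iff₀ hp0]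
    gcongr
    exact_mod_cast hrp

theorem Real.cos_le_exp_neg_sq {x : ℝ} (hx : |x| ≤ π) : cos x ≤ exp (-(2 / π ^ 2 * x ^ 2)) :=
  (cos_le_one_sub_mul_cos_sq hx).trans <| by linarith [add_one_le_exp (-(2 / π ^ 2 * x ^ 2))]

theorem cos_pi_div_le_exp {p : ℕ} (hp : p ≠ 0) : cos (π / p) ≤ exp (-2 / (p : ℝ) ^ 2) := by
  have hp1 : (1 : ℝ) ≤ p := by exact_mod_cast Nat.one_le_iff_ne_zero.mpr hp
  convert cos_le_exp_neg_sq (x := π / p) ?_ using 2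
  · field_simp
  · rw [abs_of_nonneg (by positivity)]
    exact div_le_self pi_pos.le hp1

open Classical in
/-- The Fourier coefficient of `ξ ↦ ξ·v` over `F_p` equals the product of
`|cos(2π v̂_j/p)|` over the support of `v`, which is at most
`exp(-c·|supp(v)|/p²)`. -/
theorem fourier_coefficient_support_bound :
    ∃ c : ℝ, 0 < c ∧
      ∀ p : ℕ, p.Prime → Odd p → ∀ n : ℕ, ∀ v : Fin n → ZMod p,
        ‖expE p v‖ =
          ∏ j ∈ Finset.univ.filter (fun j : Fin n => v j ≠ 0),
            |Real.cos (2 * Real.pi * ((v j).val : ℝ) / p)| ∧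
        ‖expE p v‖ ≤
          Real.exp (-c * ({j | v j ≠ 0}.ncard : ℝ) / (p : ℝ) ^ 2) := by
  refine ⟨2, two_pos, fun p _ hp n v => ?_⟩
  have : NeZero p := ⟨hp.pos.ne'⟩
  set S := Finset.univ.filter fun j : Fin n => v j ≠ 0
  have hnorm : ‖expE p v‖ = ∏ j ∈ S, |cos (2 * π * (v j).val / p)| := by
    rw [expE_eq_prod_cos, norm_prod, Finset.prod_filter_of_ne]
    · simp_rw [Complex.norm_real, Real.norm_eq_abs]
    · intro j _ h
      contrapose! h
      simp [h]
  have hfactor : ∀ j ∈ S, |cos (2 * π * (v j).val / p)| ≤ exp (-2 / (p : ℝ) ^ 2) := by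
    intro j hj
    have hval : ¬ p ∣ (v j).val := by
      rw [← ZMod.natCast_eq_zero_iff, ZMod.natCast_zmod_val]
      exact (Finset.mem_filter.mp hj).2
    exact (abs_cos_two_pi_mul_div_le hp hval).trans (cos_pi_div_le_exp hp.pos.ne')
  refine ⟨hnorm, ?_⟩
  calc ‖expE p v‖ ≤ ∏ _j ∈ S, exp (-2 / (p : ℝ) ^ 2) :=
        hnorm ▸ Finset.prod_le_prod (fun _ _ => abs_nonneg _) hfactor
    _ = exp (-2 * (S.card : ℝ) / (p : ℝ) ^ 2) := by
        rw [Finset.prod_const, ← exp_nat_mul]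
        congr 1
        ring
    _ = exp (-2 * ({j | v j ≠ 0}.ncard : ℝ) / (p : ℝ) ^ 2) := by
        rw [← Set.ncard_coe_finset, Finset.coe_filter_univ]
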